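/- Adding a zero-cost NOP chain preserves optimal value: let M be an SSP MDP with start state s0 and optimal value V*_M. Construct M' by adding new states s'_0, s'_1, ..., s'_k and a zero-cost deterministic action NOP with s'_i → s'_{i+1} for i < k and s'_k → s0, taking s'_0 as the new start state and leaving M unchanged otherwise (and also adding, in each original state of M, a self-loop NOP action with strictly positive cost). Then M' is an SSP MDP (it has a proper policy and all improper policies accrue infinite cost) and its optimal value from s'_0 equals V*_M(s0). -/

import Mathlib

open Filter

noncomputable def hitProb {σ : Type*} [Fintype σ] (P : σ → σ → ℝ) (G : σ → Prop)
    [DecidablePred G] : ℕ → σ → ℝ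
  | 0, s => if G s then 1 else 0
  | n + 1, s => if G s then 1 else ∑ s' : σ, P s s' * hitProb P G n s'

def ProperFrom {σ : Type*} [Fintype σ] (P : σ → σ → ℝ) (G : σ → Prop)
    [DecidablePred G] (s : σ) : Prop :=
  Tendsto (fun n => hitProb P G n s) atTop (nhds 1)

/-- Expected `n`-step cost of a stationary policy (per-step cost `K`, goal set `G`). -/
noncomputable def expCost {σ : Type*} [Fintype σ] (P : σ → σ → ℝ) (K : σ → ℝ)
    (G : σ → Prop) [DecidablePred G] : ℕ → σ → ℝ
  | 0, _ => 0
  | n + 1, s => if G s then 0 else ∑ s' : σ, P s s' * (K s + expCost P K G n s')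

/-- Value iteration (from the zero function) for a cost-minimizing MDP. -/
noncomputable def VI {σ α : Type*} [Fintype σ] [Fintype α] [Nonempty α]
    (P : σ → α → σ → ℝ) (K : σ → α → ℝ) (G : σ → Prop) [DecidablePred G] :
    ℕ → σ → ℝ
  | 0, _ => 0
  | n + 1, s => if G s then 0 else
      Finset.univ.inf' Finset.univ_nonempty
        (fun a => K s a + ∑ s' : σ, P s a s' * VI P K G n s')

/-- Transition function of the "lollypop" MDP `M'`: a chain of `k+1` new states
`s'_0, …, s'_k` (the `Fin (k+1)` component) linked by a deterministic zero-cost `NOP`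
(`Option.none`) into the start state `s0` of `M`; original states keep their base actions
(`Option.some a`) and additionally get a `NOP` self-loop. -/
noncomputable def lollyT {S A : Type*} [DecidableEq S] (k : ℕ)
    (T : S → A → S → ℝ) (s0 : S) :
    (S ⊕ Fin (k + 1)) → Option A → (S ⊕ Fin (k + 1)) → ℝ
  | Sum.inl s, some a, Sum.inl s' => T s a s'
  | Sum.inl _, some _, Sum.inr _ => 0
  | Sum.inl s, none, y => if y = Sum.inl s then 1 else 0
  | Sum.inr i, _, y =>
      if h : (i : ℕ) < k then
        (if y = Sum.inr ⟨(i : ℕ) + 1, Nat.succ_lt_succ h⟩ then 1 else 0)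
      else (if y = Sum.inl s0 then 1 else 0)

/-- Cost function of `M'`: base costs on original states and actions, cost `p > 0` for the
`NOP` self-loop in original states, and zero cost along the added chain. -/
noncomputable def lollyC {S A : Type*} (k : ℕ) (C : S → A → ℝ) (p : ℝ) :
    (S ⊕ Fin (k + 1)) → Option A → ℝ
  | Sum.inl s, some a => C s a
  | Sum.inl _, none => p
  | Sum.inr _, _ => 0

section Generic

variable {σ : Type*} [Fintype σ] {P : σ → σ → ℝ} {G : σ → Prop} [DecidablePred G]

lemma hitProb_goal (hG : G s) : ∀ n, hitProb P G n s = 1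
  | 0 => by simp [hitProb, hG]
  | n + 1 => by simp [hitProb, hG]

lemma hitProb_nonneg (hP0 : ∀ s s', 0 ≤ P s s') : ∀ n s, 0 ≤ hitProb P G n s
  | 0, s => by by_cases h : G s <;> simp [hitProb, h]
  | n + 1, s => by
    by_cases h : G s <;> simp only [hitProb, h, if_true, if_false]
    · norm_num
    · exact Finset.sum_nonneg fun s' _ =>
        mul_nonneg (hP0 s s') (hitProb_nonneg hP0 n s')

lemma hitProb_le_one (hP0 : ∀ s s', 0 ≤ P s s') (hP1 : ∀ s, ∑ s', P s s' = 1) :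
    ∀ n s, hitProb P G n s ≤ 1
  | 0, s => by by_cases h : G s <;> simp [hitProb, h]
  | n + 1, s => by
    by_cases h : G s
    · simp [hitProb, h]
    · simp only [hitProb, h, if_false]
      calc ∑ s', P s s' * hitProb P G n s' ≤ ∑ s', P s s' * 1 :=
            Finset.sum_le_sum fun s' _ =>
              mul_le_mul_of_nonneg_left (hitProb_le_one hP0 hP1 n s') (hP0 s s')
        _ = 1 := by simp [hP1 s]

lemma hitProb_mono (hP0 : ∀ s s', 0 ≤ P s s') :
    ∀ n s, hitProb P G n s ≤ hitProb P G (n + 1) s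
  | 0, s => by
    by_cases h : G s
    · simp [hitProb, h]
    · simp only [hitProb, h, if_false]
      exact Finset.sum_nonneg fun s' _ =>
        mul_nonneg (hP0 s s') (hitProb_nonneg hP0 0 s')
  | n + 1, s => by
    by_cases h : G s
    · simp [hitProb, h]
    · simp only [hitProb, h, if_false]
      exact Finset.sum_le_sum fun s' _ =>
        mul_le_mul_of_nonneg_left (hitProb_mono hP0 n s') (hP0 s s')

lemma hitProb_mono' (hP0 : ∀ s s', 0 ≤ P s s') {m n : ℕ} (h : m ≤ n) (s : σ) :
    hitProb P G m s ≤ hitProb P G n s := by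
  induction n with
  | zero => simp [Nat.le_zero.mp h]
  | succ n ih =>
    rcases Nat.lt_or_ge m (n+1) with h' | h'
    · exact (ih (Nat.lt_succ_iff.mp h')).trans (hitProb_mono hP0 n s)
    · have : m = n + 1 := le_antisymm h h'
      simp [this]

lemma one_sub_hitProb_succ (hP1 : ∀ s, ∑ s', P s s' = 1) {s : σ} (h : ¬ G s) (m : ℕ) :
    (1 : ℝ) - hitProb P G (m + 1) s = ∑ s', P s s' * (1 - hitProb P G m s') := by
  simp only [hitProb, h, if_false, mul_sub, Finset.sum_sub_distrib, mul_one, hP1 s]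

lemma sum_P_one_sub_hitProb (hP1 : ∀ s, ∑ s', P s s' = 1) {s : σ} (h : ¬ G s) (n : ℕ) :
    ∑ s' : σ, P s s' * ∑ m ∈ Finset.range n, (1 - hitProb P G m s')
      = ∑ m ∈ Finset.range n, (1 - hitProb P G (m + 1) s) := by
  simp only [Finset.mul_sum]
  rw [Finset.sum_comm]
  exact Finset.sum_congr rfl fun m _ => (one_sub_hitProb_succ hP1 h m).symm

lemma sum_P_affine (hP1 : ∀ s, ∑ s', P s s' = 1) (s : σ) (x y : ℝ) (F : σ → ℝ) :
    ∑ s' : σ, P s s' * (x + y * F s') = x + y * ∑ s' : σ, P s s' * F s' := by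
  have : ∀ s', P s s' * (x + y * F s') = x * P s s' + y * (P s s' * F s') := fun s' => by ring
  simp only [this, Finset.sum_add_distrib, ← Finset.mul_sum, hP1 s, mul_one]

/-- upper bound on expCost via hitting probabilities -/
lemma expCost_le_sum {K : σ → ℝ} {Kmax : ℝ} (hP0 : ∀ s s', 0 ≤ P s s')
    (hP1 : ∀ s, ∑ s', P s s' = 1) (hK : ∀ s, K s ≤ Kmax) (hK0 : 0 ≤ Kmax) :
    ∀ n s, expCost P K G n s ≤ Kmax * ∑ m ∈ Finset.range n, (1 - hitProb P G m s)
  | 0, s => by simp [expCost]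
  | n + 1, s => by
    by_cases h : G s
    · have : ∀ m, (1 : ℝ) - hitProb P G m s = 0 := fun m => by simp [hitProb_goal h]
      simp [expCost, h, this]
    · simp only [expCost, h, if_false]
      calc ∑ s', P s s' * (K s + expCost P K G n s')
          ≤ ∑ s', P s s' * (Kmax + Kmax * ∑ m ∈ Finset.range n, (1 - hitProb P G m s')) :=
            Finset.sum_le_sum fun s' _ => mul_le_mul_of_nonneg_left
              (add_le_add (hK s) (expCost_le_sum hP0 hP1 hK hK0 n s')) (hP0 s s')
        _ = Kmax + Kmax * ∑ m ∈ Finset.range n, (1 - hitProb P G (m + 1) s) := by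
            rw [sum_P_affine hP1 s, sum_P_one_sub_hitProb hP1 h]
        _ = Kmax * ∑ m ∈ Finset.range (n + 1), (1 - hitProb P G m s) := by
            rw [Finset.sum_range_succ' (fun m => (1 : ℝ) - hitProb P G m s) n]
            simp only [hitProb, h, if_false]
            ring

/-- lower bound on expCost via hitting probabilities -/
lemma expCost_ge_sum {K : σ → ℝ} {c : ℝ} (hP0 : ∀ s s', 0 ≤ P s s')
    (hP1 : ∀ s, ∑ s', P s s' = 1) (hK : ∀ s, c ≤ K s) (hc0 : 0 ≤ c) :
    ∀ n s, c * ∑ m ∈ Finset.range n, (1 - hitProb P G m s) ≤ expCost P K G n s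
  | 0, s => by simp [expCost]
  | n + 1, s => by
    by_cases h : G s
    · have : ∀ m, (1 : ℝ) - hitProb P G m s = 0 := fun m => by simp [hitProb_goal h]
      simp [expCost, h, this]
    · simp only [expCost, h, if_false]
      calc c * ∑ m ∈ Finset.range (n + 1), (1 - hitProb P G m s)
          = c + c * ∑ m ∈ Finset.range n, (1 - hitProb P G (m + 1) s) := by
            rw [Finset.sum_range_succ' (fun m => (1 : ℝ) - hitProb P G m s) n]
            simp only [hitProb, h, if_false]
            ring
        _ = ∑ s', P s s' * (c + c * ∑ m ∈ Finset.range n, (1 - hitProb P G m s')) := by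
            rw [sum_P_affine hP1 s, sum_P_one_sub_hitProb hP1 h]
        _ ≤ ∑ s', P s s' * (K s + expCost P K G n s') :=
            Finset.sum_le_sum fun s' _ => mul_le_mul_of_nonneg_left
              (add_le_add (hK s) (expCost_ge_sum hP0 hP1 hK hc0 n s')) (hP0 s s')

/-- improper implies infinite cost (strictly positive costs, finite state space) -/
lemma improper_expCost_tendsto {K : σ → ℝ} {c : ℝ} (hP0 : ∀ s s', 0 ≤ P s s')
    (hP1 : ∀ s, ∑ s', P s s' = 1) (hK : ∀ s, c ≤ K s) (hc : 0 < c) {s : σ}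
    (himp : ¬ ProperFrom P G s) :
    Tendsto (fun n => expCost P K G n s) atTop atTop := by
  set L := ⨆ n, hitProb P G n s with hL
  have hbdd : BddAbove (Set.range fun n => hitProb P G n s) :=
    ⟨1, by rintro x ⟨n, rfl⟩; exact hitProb_le_one hP0 hP1 n s⟩
  have hmono : Monotone fun n => hitProb P G n s :=
    monotone_nat_of_le_succ fun n => hitProb_mono hP0 n s
  have htend : Tendsto (fun n => hitProb P G n s) atTop (nhds L) :=
    tendsto_atTop_ciSup hmono hbdd
  have hL1 : L ≤ 1 := ciSup_le fun n => hitProb_le_one hP0 hP1 n s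
  have hLne : L ≠ 1 := by
    intro hEq
    rw [hEq] at htend
    exact himp htend
  have hLlt : L < 1 := lt_of_le_of_ne hL1 hLne
  have hterm : ∀ m, 1 - L ≤ 1 - hitProb P G m s := fun m =>
    sub_le_sub_left (le_ciSup hbdd m) 1
  have hlow : ∀ n : ℕ, c * ((n : ℝ) * (1 - L)) ≤ expCost P K G n s := by
    intro n
    refine le_trans ?_ (expCost_ge_sum hP0 hP1 hK hc.le n s)
    refine mul_le_mul_of_nonneg_left ?_ hc.le
    calc (n : ℝ) * (1 - L) = (Finset.range n).card • (1 - L) := by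
          simp [nsmul_eq_mul]
      _ ≤ ∑ m ∈ Finset.range n, (1 - hitProb P G m s) :=
          Finset.card_nsmul_le_sum _ _ _ fun m _ => hterm m
  refine tendsto_atTop_mono hlow ?_
  have h1 : Tendsto (fun n : ℕ => (n : ℝ)) atTop atTop := tendsto_natCast_atTop_atTop
  have h2 : Tendsto (fun n : ℕ => (n : ℝ) * (1 - L)) atTop atTop :=
    h1.atTop_mul_const (by linarith)
  exact h2.const_mul_atTop hc

variable [Nonempty σ]

/-- Maximal probability of not having reached the goal in `n` steps. -/
noncomputable def resid (P : σ → σ → ℝ) (G : σ → Prop) [DecidablePred G] (n : ℕ) : ℝ :=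
  Finset.univ.sup' Finset.univ_nonempty fun s => 1 - hitProb P G n s

lemma le_resid (n : ℕ) (s : σ) : 1 - hitProb P G n s ≤ resid P G n :=
  Finset.le_sup' (fun s => 1 - hitProb P G n s) (Finset.mem_univ s)

lemma resid_nonneg (hP0 : ∀ s s', 0 ≤ P s s') (hP1 : ∀ s, ∑ s', P s s' = 1) (n : ℕ) :
    0 ≤ resid P G n := by
  obtain ⟨s⟩ := ‹Nonempty σ›
  exact le_trans (by linarith [hitProb_le_one (G := G) hP0 hP1 n s]) (le_resid n s)

lemma resid_antitone (hP0 : ∀ s s', 0 ≤ P s s') {m n : ℕ} (h : m ≤ n) :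
    resid P G n ≤ resid P G m := by
  apply Finset.sup'_le
  intro s _
  exact le_trans (by linarith [hitProb_mono' (G := G) hP0 h s]) (le_resid m s)

lemma resid_le_one (hP0 : ∀ s s', 0 ≤ P s s') : resid P G 0 ≤ 1 := by
  apply Finset.sup'_le
  intro s _
  linarith [hitProb_nonneg (G := G) hP0 0 s]

lemma one_sub_hitProb_le_mul (hP0 : ∀ s s', 0 ≤ P s s') (hP1 : ∀ s, ∑ s', P s s' = 1) :
    ∀ N m s, 1 - hitProb P G (N + m) s ≤ resid P G m * (1 - hitProb P G N s)
  | 0, m, s => by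
    by_cases h : G s
    · simp [hitProb_goal h]
    · have : hitProb P G 0 s = 0 := by simp [hitProb, h]
      rw [Nat.zero_add, this]
      simpa using le_resid (G := G) m s
  | N + 1, m, s => by
    by_cases h : G s
    · simp [hitProb_goal h]
    · have e : N + 1 + m = (N + m) + 1 := by omega
      rw [e, one_sub_hitProb_succ hP1 h, one_sub_hitProb_succ hP1 h]
      have hr := resid_nonneg (G := G) hP0 hP1 m
      calc ∑ s', P s s' * (1 - hitProb P G (N + m) s')
          ≤ ∑ s', P s s' * (resid P G m * (1 - hitProb P G N s')) :=
            Finset.sum_le_sum fun s' _ => mul_le_mul_of_nonneg_left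
              (one_sub_hitProb_le_mul hP0 hP1 N m s') (hP0 s s')
        _ = resid P G m * ∑ s', P s s' * (1 - hitProb P G N s') := by
            rw [Finset.mul_sum]; exact Finset.sum_congr rfl fun s' _ => by ring

lemma resid_mul_pow (hP0 : ∀ s s', 0 ≤ P s s') (hP1 : ∀ s, ∑ s', P s s' = 1) (N : ℕ) :
    ∀ q, resid P G (q * N) ≤ (resid P G N) ^ q
  | 0 => by simpa using resid_le_one (G := G) hP0
  | q + 1 => by
    have hrN := resid_nonneg (G := G) hP0 hP1 N
    have hrq := resid_nonneg (G := G) hP0 hP1 (q * N)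
    have e : (q + 1) * N = N + q * N := by ring
    rw [e, pow_succ]
    apply Finset.sup'_le
    intro s _
    calc 1 - hitProb P G (N + q * N) s
        ≤ resid P G (q * N) * (1 - hitProb P G N s) :=
          one_sub_hitProb_le_mul hP0 hP1 N (q * N) s
      _ ≤ (resid P G N) ^ q * resid P G N :=
          mul_le_mul (resid_mul_pow hP0 hP1 N q) (le_resid N s) (by
            linarith [hitProb_le_one (G := G) hP0 hP1 N s]) (pow_nonneg hrN q)

lemma sum_resid_le (hP0 : ∀ s s', 0 ≤ P s s') (hP1 : ∀ s, ∑ s', P s s' = 1)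
    {N : ℕ} (hN1 : 1 ≤ N) (hN : resid P G N ≤ 1 / 2) (n : ℕ) :
    ∑ m ∈ Finset.range n, resid P G m ≤ 2 * N := by
  have hrN := resid_nonneg (G := G) hP0 hP1 N
  have hres : ∀ m, resid P G m ≤ (1 / 2 : ℝ) ^ (m / N) := by
    intro m
    calc resid P G m ≤ resid P G (m / N * N) :=
          resid_antitone hP0 (Nat.div_mul_le_self m N)
      _ ≤ (resid P G N) ^ (m / N) := resid_mul_pow hP0 hP1 N (m / N)
      _ ≤ (1 / 2 : ℝ) ^ (m / N) := pow_le_pow_left₀ hrN hN _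
  calc ∑ m ∈ Finset.range n, resid P G m
      ≤ ∑ m ∈ Finset.range n, (1 / 2 : ℝ) ^ (m / N) := Finset.sum_le_sum fun m _ => hres m
    _ ≤ 2 * N := by
        have hN0 : 0 < N := hN1
        have geom2 : ∀ q : ℕ, ∑ j ∈ Finset.range q, (1 / 2 : ℝ) ^ j ≤ 2 := by
          intro q
          rw [geom_sum_eq (by norm_num : (1 / 2 : ℝ) ≠ 1) q]
          have h := pow_nonneg (by norm_num : (0 : ℝ) ≤ 1 / 2) q
          have h2 := pow_le_one₀ (by norm_num : (0 : ℝ) ≤ 1 / 2) (by norm_num : (1 / 2 : ℝ) ≤ 1) (n := q)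
          rw [div_le_iff_of_neg (by norm_num : (1 / 2 : ℝ) - 1 < 0)]
          linarith
        have key : ∀ q : ℕ, ∀ t ≤ N, ∑ m ∈ Finset.range (q * N + t), (1 / 2 : ℝ) ^ (m / N)
            ≤ N * (∑ j ∈ Finset.range q, (1 / 2 : ℝ) ^ j) + t * (1 / 2 : ℝ) ^ q := by
          intro q
          induction q with
          | zero =>
            intro t ht
            simp only [Nat.zero_mul, Nat.zero_add, Finset.range_zero, Finset.sum_empty,
              mul_zero, pow_zero, mul_one, zero_add]
            calc ∑ m ∈ Finset.range t, (1 / 2 : ℝ) ^ (m / N)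
                ≤ ∑ _m ∈ Finset.range t, (1 : ℝ) := Finset.sum_le_sum fun m _ =>
                  pow_le_one₀ (by norm_num) (by norm_num)
              _ = t := by simp
          | succ q ihq =>
            intro t
            induction t with
            | zero =>
              intro _
              have h1 := ihq N le_rfl
              have e : (q + 1) * N + 0 = q * N + N := by ring
              rw [e]
              rw [Finset.sum_range_succ]
              push_cast
              linarith
            | succ t iht =>
              intro ht
              have ht' : t ≤ N := by omega
              have htlt : t < N := by omega
              have h1 := iht ht'
              have e : (q + 1) * N + (t + 1) = ((q + 1) * N + t) + 1 := rfl
              rw [e, Finset.sum_range_succ]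
              have hdiv : ((q + 1) * N + t) / N = q + 1 := by
                apply Nat.div_eq_of_lt_le
                · exact Nat.le_add_right _ _
                · calc (q + 1) * N + t < (q + 1) * N + N := by omega
                    _ = (q + 1 + 1) * N := by ring
              rw [hdiv]
              push_cast
              linarith
        have h1 := key n 0 (Nat.zero_le N)
        have h2 : ∑ m ∈ Finset.range n, (1 / 2 : ℝ) ^ (m / N)
            ≤ ∑ m ∈ Finset.range (n * N + 0), (1 / 2 : ℝ) ^ (m / N) := by
          apply Finset.sum_le_sum_of_subset_of_nonneg
          · exact Finset.range_subset_range.mpr (by nlinarith [Nat.le_mul_of_pos_right n hN0])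
          · intro m _ _
            positivity
        have h3 := geom2 n
        have hNr : (0 : ℝ) ≤ N := Nat.cast_nonneg N
        calc ∑ m ∈ Finset.range n, (1 / 2 : ℝ) ^ (m / N) ≤ N * (∑ j ∈ Finset.range n, (1 / 2 : ℝ) ^ j) + 0 := by
              push_cast at h1 ⊢; linarith
          _ ≤ 2 * N := by nlinarith

/-- Under a fully proper policy the expected costs are uniformly bounded. -/
lemma expCost_bounded {K : σ → ℝ} (hP0 : ∀ s s', 0 ≤ P s s')
    (hP1 : ∀ s, ∑ s', P s s' = 1) (hproper : ∀ s, ProperFrom P G s) :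
    ∃ B : ℝ, ∀ n s, expCost P K G n s ≤ B := by
  classical
  -- a uniform horizon
  have hNs : ∀ s : σ, ∃ Ns : ℕ, ∀ n ≥ Ns, (1 / 2 : ℝ) ≤ hitProb P G n s := by
    intro s
    have := Filter.Tendsto.eventually_const_le (by norm_num : (1 / 2 : ℝ) < 1) (hproper s)
    exact eventually_atTop.mp this
  choose Ns hNsspec using hNs
  set N : ℕ := max 1 (Finset.univ.sup Ns) with hNdef
  have hN1 : 1 ≤ N := le_max_left _ _
  have hNres : resid P G N ≤ 1 / 2 := by
    apply Finset.sup'_le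
    intro s _
    have hs : Ns s ≤ N := le_trans (Finset.le_sup (Finset.mem_univ s)) (le_max_right _ _)
    have := hNsspec s N hs
    linarith
  set Kmax : ℝ := max 0 (Finset.univ.sup' Finset.univ_nonempty K) with hKdef
  have hKmax : ∀ s, K s ≤ Kmax := fun s =>
    le_trans (Finset.le_sup' K (Finset.mem_univ s)) (le_max_right _ _)
  have hK0 : 0 ≤ Kmax := le_max_left _ _
  refine ⟨Kmax * (2 * N), ?_⟩
  intro n s
  calc expCost P K G n s ≤ Kmax * ∑ m ∈ Finset.range n, (1 - hitProb P G m s) :=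
        expCost_le_sum hP0 hP1 hKmax hK0 n s
    _ ≤ Kmax * ∑ m ∈ Finset.range n, resid P G m :=
        mul_le_mul_of_nonneg_left (Finset.sum_le_sum fun m _ => le_resid m s) hK0
    _ ≤ Kmax * (2 * N) :=
        mul_le_mul_of_nonneg_left (sum_resid_le hP0 hP1 hN1 hNres n) hK0

section VIlemmas

variable {α : Type*} [Fintype α] [Nonempty α] {Pa : σ → α → σ → ℝ} {Ka : σ → α → ℝ}

lemma VI_nonneg (hP0 : ∀ s a s', 0 ≤ Pa s a s') (hK0 : ∀ s a, 0 ≤ Ka s a) :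
    ∀ n s, 0 ≤ VI Pa Ka G n s
  | 0, s => le_refl _
  | n + 1, s => by
    by_cases h : G s
    · simp [VI, h]
    · simp only [VI, h, if_false]
      apply Finset.le_inf'
      intro a _
      have : 0 ≤ ∑ s', Pa s a s' * VI Pa Ka G n s' :=
        Finset.sum_nonneg fun s' _ => mul_nonneg (hP0 s a s') (VI_nonneg hP0 hK0 n s')
      linarith [hK0 s a]

lemma VI_mono (hP0 : ∀ s a s', 0 ≤ Pa s a s') (hK0 : ∀ s a, 0 ≤ Ka s a) :
    ∀ n s, VI Pa Ka G n s ≤ VI Pa Ka G (n + 1) s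
  | 0, s => VI_nonneg hP0 hK0 1 s
  | n + 1, s => by
    by_cases h : G s
    · simp [VI, h]
    · simp only [VI, h, if_false]
      apply Finset.le_inf'
      intro a _
      refine le_trans (Finset.inf'_le _ (Finset.mem_univ a)) ?_
      gcongr with s' _
      · exact hP0 s a s'
      · exact VI_mono hP0 hK0 n s'

lemma VI_mono' (hP0 : ∀ s a s', 0 ≤ Pa s a s') (hK0 : ∀ s a, 0 ≤ Ka s a)
    {m n : ℕ} (h : m ≤ n) (s : σ) : VI Pa Ka G m s ≤ VI Pa Ka G n s := by
  induction n with
  | zero => simp [Nat.le_zero.mp h]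
  | succ n ih =>
    rcases Nat.lt_or_ge m (n + 1) with h' | h'
    · exact (ih (Nat.lt_succ_iff.mp h')).trans (VI_mono hP0 hK0 n s)
    · have : m = n + 1 := le_antisymm h h'
      simp [this]

lemma VI_le_expCost (hP0 : ∀ s a s', 0 ≤ Pa s a s') (π : σ → α)
    (hP1 : ∀ s, ∑ s', Pa s (π s) s' = 1) :
    ∀ n s, VI Pa Ka G n s ≤ expCost (fun s s' => Pa s (π s) s') (fun s => Ka s (π s)) G n s
  | 0, s => le_refl _
  | n + 1, s => by
    by_cases h : G s
    · simp [VI, expCost, h]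
    · simp only [VI, expCost, h, if_false]
      refine le_trans (Finset.inf'_le _ (Finset.mem_univ (π s))) ?_
      have e := sum_P_affine (P := fun s s' => Pa s (π s) s') hP1 s (Ka s (π s)) 1
        (fun s' => expCost (fun s s' => Pa s (π s) s') (fun s => Ka s (π s)) G n s')
      simp only [one_mul] at e
      rw [e]
      gcongr with s' _
      · exact hP0 s (π s) s'
      · exact VI_le_expCost hP0 π hP1 n s'

end VIlemmas

end Generic

lemma tendsto_finset_inf'' {ι : Type*} {s : Finset ι} (hs : s.Nonempty)
    {f : ι → ℕ → ℝ} {g : ι → ℝ} (h : ∀ i ∈ s, Filter.Tendsto (f i) Filter.atTop (nhds (g i))) :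
    Filter.Tendsto (fun m => s.inf' hs (fun i => f i m)) Filter.atTop (nhds (s.inf' hs g)) := by
  induction hs using Finset.Nonempty.cons_induction with
  | singleton a =>
    have := h a (by simp)
    simpa [Finset.inf'_singleton] using this
  | cons a t ha hne ih =>
    have h2 := (h a (Finset.mem_cons_self a t)).min
      (ih fun i hi => h i (Finset.mem_cons_of_mem hi))
    have e1 : ∀ m, (Finset.cons a t ha).inf' (Finset.cons_nonempty ha) (fun i => f i m)
        = f a m ⊓ t.inf' hne (fun i => f i m) := fun m => Finset.inf'_cons hne _
    have e2 : (Finset.cons a t ha).inf' (Finset.cons_nonempty ha) g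
        = g a ⊓ t.inf' hne g := Finset.inf'_cons hne _
    rw [show (fun m => (Finset.cons a t ha).inf' (Finset.cons_nonempty ha) (fun i => f i m))
        = fun m => f a m ⊓ t.inf' hne (fun i => f i m) from funext e1, e2]
    exact h2


section Lolly

open Filter

variable {S A : Type*} [Fintype S] [Fintype A] [Nonempty A] [DecidableEq S]
variable {T : S → A → S → ℝ} {C : S → A → ℝ}

/-- successor along the chain -/
def nxt (s0 : S) (k : ℕ) (i : Fin (k + 1)) : S ⊕ Fin (k + 1) :=
  if h : (i : ℕ) < k then Sum.inr ⟨(i : ℕ) + 1, Nat.succ_lt_succ h⟩ else Sum.inl s0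

lemma lollyT_inl_some (k : ℕ) (s0 : S) (s : S) (a : A) (s' : S) :
    lollyT k T s0 (Sum.inl s) (some a) (Sum.inl s') = T s a s' := rfl

lemma lollyT_inl_inr (k : ℕ) (s0 : S) (s : S) (a : Option A) (j : Fin (k + 1)) :
    lollyT k T s0 (Sum.inl s) a (Sum.inr j) = 0 := by
  cases a with
  | none => simp [lollyT]
  | some a => rfl

lemma lollyT_inl_none (k : ℕ) (s0 : S) (s : S) (s' : S) :
    lollyT k T s0 (Sum.inl s) none (Sum.inl s') = if s' = s then 1 else 0 := by
  simp [lollyT]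

lemma lollyT_inr (k : ℕ) (s0 : S) (i : Fin (k + 1)) (a : Option A) (y : S ⊕ Fin (k + 1)) :
    lollyT k T s0 (Sum.inr i) a y = if y = nxt s0 k i then 1 else 0 := by
  by_cases h : (i : ℕ) < k
  · cases a <;> simp [lollyT, nxt, h]
  · cases a <;> simp [lollyT, nxt, h]

lemma lollyC_inr {k : ℕ} (p : ℝ) (i : Fin (k + 1)) (a : Option A) :
    lollyC k C p (Sum.inr i) a = 0 := by
  cases a <;> rfl

lemma lollyT_nonneg (hT0 : ∀ s a s', 0 ≤ T s a s') (k : ℕ) (s0 : S) :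
    ∀ x a y, 0 ≤ lollyT k T s0 x a y := by
  rintro (s | i) a (y | y)
  · cases a with
    | none => rw [lollyT_inl_none]; split <;> norm_num
    | some a => exact hT0 s a y
  · rw [lollyT_inl_inr]
  · rw [lollyT_inr]; split <;> norm_num
  · rw [lollyT_inr]; split <;> norm_num

lemma lollyC_nonneg (hC : ∀ s a, 0 < C s a) {p : ℝ} (hp : 0 < p) (k : ℕ) :
    ∀ x a, 0 ≤ lollyC k C p x a := by
  rintro (s | i) a
  · cases a with
    | none => exact hp.le
    | some a => exact (hC s a).le
  · rw [lollyC_inr]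

lemma sum_indicator_mul {τ : Type*} [Fintype τ] [DecidableEq τ] (t : τ) (f : τ → ℝ) :
    ∑ y, (if y = t then 1 else 0) * f y = f t := by
  simp [ite_mul, Finset.sum_ite_eq']

section Policy

variable {k : ℕ} {p : ℝ} (s0 sg : S) (π' : S ⊕ Fin (k + 1) → Option A)

/-- restriction of a policy of `M'` to the original states -/
noncomputable def resP (T : S → A → S → ℝ) (s0 : S) (k : ℕ)
    (π' : S ⊕ Fin (k + 1) → Option A) : S → S → ℝ :=
  fun s s' => lollyT k T s0 (Sum.inl s) (π' (Sum.inl s)) (Sum.inl s')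

noncomputable def resK (C : S → A → ℝ) (p : ℝ) (k : ℕ)
    (π' : S ⊕ Fin (k + 1) → Option A) : S → ℝ :=
  fun s => lollyC k C p (Sum.inl s) (π' (Sum.inl s))

lemma resP_nonneg (hT0 : ∀ s a s', 0 ≤ T s a s') :
    ∀ s s', 0 ≤ resP T s0 k π' s s' :=
  fun s s' => lollyT_nonneg hT0 k s0 _ _ _

lemma resP_rowsum (hT1 : ∀ s a, ∑ s', T s a s' = 1) :
    ∀ s, ∑ s', resP T s0 k π' s s' = 1 := by
  intro s
  unfold resP
  cases hh : π' (Sum.inl s) with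
  | none => simp [lollyT_inl_none, Finset.sum_ite_eq']
  | some a => simp only [lollyT_inl_some]; exact hT1 s a

lemma hitProb_transfer :
    ∀ n s, hitProb (fun x y => lollyT k T s0 x (π' x) y) (fun y => y = Sum.inl sg) n
      (Sum.inl s) = hitProb (resP T s0 k π') (fun t => t = sg) n s
  | 0, s => by simp [hitProb]
  | n + 1, s => by
    by_cases h : s = sg
    · simp [hitProb, h]
    · simp only [hitProb, h, if_false, Sum.inl.injEq]
      rw [Fintype.sum_sum_type]
      have hz : ∀ j : Fin (k + 1), lollyT k T s0 (Sum.inl s) (π' (Sum.inl s)) (Sum.inr j) *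
          hitProb (fun x y => lollyT k T s0 x (π' x) y) (fun y => y = Sum.inl sg) n
            (Sum.inr j) = 0 := by
        intro j; rw [lollyT_inl_inr, zero_mul]
      rw [Finset.sum_congr rfl (fun j _ => hz j), Finset.sum_const, smul_zero, add_zero]
      exact Finset.sum_congr rfl fun s' _ => by
        rw [hitProb_transfer n s']
        rfl

lemma expCost_transfer :
    ∀ n s, expCost (fun x y => lollyT k T s0 x (π' x) y)
        (fun x => lollyC k C p x (π' x)) (fun y => y = Sum.inl sg) n (Sum.inl s)
      = expCost (resP T s0 k π') (resK C p k π') (fun t => t = sg) n s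
  | 0, s => by simp [expCost]
  | n + 1, s => by
    by_cases h : s = sg
    · simp [expCost, h]
    · simp only [expCost, h, if_false, Sum.inl.injEq]
      rw [Fintype.sum_sum_type]
      have hz : ∀ j : Fin (k + 1), lollyT k T s0 (Sum.inl s) (π' (Sum.inl s)) (Sum.inr j) *
          (lollyC k C p (Sum.inl s) (π' (Sum.inl s)) + expCost (fun x y => lollyT k T s0 x (π' x) y)
            (fun x => lollyC k C p x (π' x)) (fun y => y = Sum.inl sg) n (Sum.inr j)) = 0 := by
        intro j; rw [lollyT_inl_inr, zero_mul]
      rw [Finset.sum_congr rfl (fun j _ => hz j), Finset.sum_const, smul_zero, add_zero]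
      exact Finset.sum_congr rfl fun s' _ => by
        rw [expCost_transfer n s']
        rfl

lemma hitProb_chain_step (n : ℕ) (i : Fin (k + 1)) :
    hitProb (fun x y => lollyT k T s0 x (π' x) y) (fun y => y = Sum.inl sg) (n + 1)
      (Sum.inr i) = hitProb (fun x y => lollyT k T s0 x (π' x) y)
        (fun y => y = Sum.inl sg) n (nxt s0 k i) := by
  simp only [hitProb, reduceCtorEq, if_false]
  have : ∀ y, lollyT k T s0 (Sum.inr i) (π' (Sum.inr i)) y = if y = nxt s0 k i then 1 else 0 :=
    fun y => lollyT_inr k s0 i _ y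
  simp only [this]
  exact sum_indicator_mul _ _

lemma expCost_chain_step (n : ℕ) (i : Fin (k + 1)) :
    expCost (fun x y => lollyT k T s0 x (π' x) y) (fun x => lollyC k C p x (π' x))
      (fun y => y = Sum.inl sg) (n + 1) (Sum.inr i)
    = expCost (fun x y => lollyT k T s0 x (π' x) y) (fun x => lollyC k C p x (π' x))
        (fun y => y = Sum.inl sg) n (nxt s0 k i) := by
  simp only [expCost, reduceCtorEq, if_false]
  have h1 : ∀ y, lollyT k T s0 (Sum.inr i) (π' (Sum.inr i)) y = if y = nxt s0 k i then 1 else 0 :=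
    fun y => lollyT_inr k s0 i _ y
  simp only [h1, lollyC_inr, zero_add]
  exact sum_indicator_mul _ _

end Policy

lemma VI_chain_step {k : ℕ} {p : ℝ} (s0 sg : S) (n : ℕ) (i : Fin (k + 1)) :
    VI (lollyT k T s0) (lollyC k C p) (fun y => y = Sum.inl sg) (n + 1) (Sum.inr i)
    = VI (lollyT k T s0) (lollyC k C p) (fun y => y = Sum.inl sg) n (nxt s0 k i) := by
  simp only [VI, reduceCtorEq, if_false]
  have h1 : ∀ (a : Option A), lollyC k C p (Sum.inr i) a +
      ∑ y, lollyT k T s0 (Sum.inr i) a y *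
        VI (lollyT k T s0) (lollyC k C p) (fun y => y = Sum.inl sg) n y
      = VI (lollyT k T s0) (lollyC k C p) (fun y => y = Sum.inl sg) n (nxt s0 k i) := by
    intro a
    have : ∀ y, lollyT k T s0 (Sum.inr i) a y = if y = nxt s0 k i then 1 else 0 :=
      fun y => lollyT_inr k s0 i a y
    simp only [this, lollyC_inr, zero_add]
    exact sum_indicator_mul _ _
  simp only [h1]
  exact Finset.inf'_const _ _

/-- iterate any function with the chain-step property down the chain -/
lemma chain_iter {k : ℕ} (s0 : S) (f : ℕ → (S ⊕ Fin (k + 1)) → ℝ)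
    (hstep : ∀ n (i : Fin (k + 1)), f (n + 1) (Sum.inr i) = f n (nxt s0 k i)) :
    ∀ (t : ℕ) (i : Fin (k + 1)), (i : ℕ) + t = k → ∀ n,
      f (n + (t + 1)) (Sum.inr i) = f n (Sum.inl s0)
  | 0, i, hik, n => by
    have h : ¬ ((i : ℕ) < k) := by omega
    have : nxt s0 k i = Sum.inl s0 := by simp [nxt, h]
    rw [show n + (0 + 1) = n + 1 from rfl, hstep n i, this]
  | t + 1, i, hik, n => by
    have h : (i : ℕ) < k := by omega
    have e1 : nxt s0 k i = Sum.inr ⟨(i : ℕ) + 1, Nat.succ_lt_succ h⟩ := by simp [nxt, h]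
    have e2 : n + (t + 1 + 1) = (n + (t + 1)) + 1 := by omega
    rw [e2, hstep _ i, e1,
      chain_iter s0 f hstep t ⟨(i : ℕ) + 1, Nat.succ_lt_succ h⟩ (by simp; omega) n]

/-- value iteration of `M'` at original states is below value iteration of `M` -/
lemma VI_lolly_le (hT0 : ∀ s a s', 0 ≤ T s a s') {k : ℕ} {p : ℝ} (s0 sg : S) :
    ∀ n s, VI (lollyT k T s0) (lollyC k C p) (fun y => y = Sum.inl sg) n (Sum.inl s)
      ≤ VI T C (fun t => t = sg) n s
  | 0, s => le_refl _
  | n + 1, s => by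
    by_cases h : s = sg
    · simp [VI, h]
    · simp only [VI, h, if_false, Sum.inl.injEq]
      apply Finset.le_inf'
      intro a _
      refine le_trans (Finset.inf'_le _ (Finset.mem_univ (some a))) ?_
      show lollyC k C p (Sum.inl s) (some a) + _ ≤ _
      rw [show lollyC k C p (Sum.inl s) (some a) = C s a from rfl]
      rw [Fintype.sum_sum_type]
      have hz : ∀ j : Fin (k + 1), lollyT k T s0 (Sum.inl s) (some a) (Sum.inr j) *
          VI (lollyT k T s0) (lollyC k C p) (fun y => y = Sum.inl sg) n (Sum.inr j) = 0 := by
        intro j; rw [lollyT_inl_inr, zero_mul]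
      rw [Finset.sum_congr rfl (fun j _ => hz j), Finset.sum_const, smul_zero, add_zero]
      simp only [lollyT_inl_some]
      gcongr with s' _
      · exact hT0 s a s'
      · exact VI_lolly_le hT0 s0 sg n s'

end Lolly


/-- adding a zero-cost NOP chain preserves the optimal value: if `M` is an
SSP MDP (proper policy exists; improper policies accrue infinite cost) with strictly
positive costs, then the lollypop MDP `M'` is again an SSP MDP, and its optimal value from
the new start state `s'_0` equals the optimal value of `M` from `s0` (optimal values being
the suprema of value iteration). -/
theorem lollypop_preserves_optimal_value
    {S A : Type*} [Fintype S] [Fintype A] [Nonempty A] [DecidableEq S]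
    (T : S → A → S → ℝ) (C : S → A → ℝ) (s0 sg : S)
    (hT0 : ∀ s a s', 0 ≤ T s a s') (hT1 : ∀ s a, ∑ s', T s a s' = 1)
    (hC : ∀ s a, 0 < C s a)
    (hproper : ∃ π : S → A, ∀ s,
      ProperFrom (fun s s' => T s (π s) s') (fun t => t = sg) s)
    (himp : ∀ (π : S → A) (s : S),
      ¬ ProperFrom (fun s s' => T s (π s) s') (fun t => t = sg) s →
      Tendsto (fun n => expCost (fun s s' => T s (π s) s') (fun s => C s (π s))
        (fun t => t = sg) n s) atTop atTop)
    (k : ℕ) (p : ℝ) (hp : 0 < p) :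
    -- M' has a complete proper policy
    (∃ π' : S ⊕ Fin (k + 1) → Option A, ∀ x,
      ProperFrom (fun x y => lollyT k T s0 x (π' x) y)
        (fun y => y = Sum.inl sg) x) ∧
    -- every improper policy of M' accumulates infinite cost
    (∀ (π' : S ⊕ Fin (k + 1) → Option A) (x : S ⊕ Fin (k + 1)),
      ¬ ProperFrom (fun x y => lollyT k T s0 x (π' x) y) (fun y => y = Sum.inl sg) x →
      Tendsto (fun n => expCost (fun x y => lollyT k T s0 x (π' x) y)
        (fun x => lollyC k C p x (π' x)) (fun y => y = Sum.inl sg) n x) atTop atTop) ∧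
    -- and the optimal value of M' from s'_0 equals the optimal value of M from s0
    (⨆ n : ℕ, VI (lollyT k T s0) (lollyC k C p) (fun y => y = Sum.inl sg) n
        (Sum.inr (0 : Fin (k + 1)))) =
      ⨆ n : ℕ, VI T C (fun t => t = sg) n s0 := by
  classical
  haveI : Nonempty S := ⟨s0⟩
  obtain ⟨π, hπ⟩ := hproper
  -- the chain identity for arbitrary policies
  have hile : ∀ i : Fin (k + 1), (i : ℕ) + (k - (i : ℕ)) = k := fun i => by
    have := i.isLt; omega
  -- Part 1 : a proper policy for M'
  have part1 : ∃ π' : S ⊕ Fin (k + 1) → Option A, ∀ x,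
      ProperFrom (fun x y => lollyT k T s0 x (π' x) y) (fun y => y = Sum.inl sg) x := by
    refine ⟨Sum.elim (fun s => some (π s)) (fun _ => none), ?_⟩
    set π₀ : S ⊕ Fin (k + 1) → Option A := Sum.elim (fun s => some (π s)) (fun _ => none)
      with hπ₀
    have hres : resP T s0 k π₀ = fun s s' => T s (π s) s' := rfl
    have hinl : ∀ s : S,
        ProperFrom (fun x y => lollyT k T s0 x (π₀ x) y) (fun y => y = Sum.inl sg)
          (Sum.inl s) := by
      intro s
      have he : (fun n => hitProb (fun x y => lollyT k T s0 x (π₀ x) y)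
          (fun y => y = Sum.inl sg) n (Sum.inl s))
          = fun n => hitProb (fun s s' => T s (π s) s') (fun t => t = sg) n s := by
        funext n
        rw [hitProb_transfer s0 sg π₀ n s, hres]
      show Tendsto _ atTop (nhds 1)
      rw [he]
      exact hπ s
    rintro (s | i)
    · exact hinl s
    · have hchain := chain_iter s0
        (fun n x => hitProb (fun x y => lollyT k T s0 x (π₀ x) y)
          (fun y => y = Sum.inl sg) n x)
        (fun n i => hitProb_chain_step s0 sg π₀ n i) (k - (i : ℕ)) i (hile i)
      show Tendsto _ atTop (nhds 1)
      refine (tendsto_add_atTop_iff_nat (k - (i : ℕ) + 1)).mp ?_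
      have he : (fun n => hitProb (fun x y => lollyT k T s0 x (π₀ x) y)
          (fun y => y = Sum.inl sg) (n + (k - (i : ℕ) + 1)) (Sum.inr i))
          = fun n => hitProb (fun x y => lollyT k T s0 x (π₀ x) y)
            (fun y => y = Sum.inl sg) n (Sum.inl s0) := by
        funext n; exact hchain n
      rw [he]
      exact hinl s0
  refine ⟨part1, ?_, ?_⟩
  -- Part 2 : improper policies have infinite cost
  · have hcdef : (0 : ℝ) < min p (Finset.univ.inf' Finset.univ_nonempty
        fun sa : S × A => C sa.1 sa.2) := by
      refine lt_min hp ?_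
      rw [Finset.lt_inf'_iff]
      exact fun sa _ => hC sa.1 sa.2
    set c : ℝ := min p (Finset.univ.inf' Finset.univ_nonempty
      fun sa : S × A => C sa.1 sa.2) with hc
    intro π' x himp'
    have hKc : ∀ s, c ≤ resK C p k π' s := by
      intro s
      unfold resK
      cases hh : π' (Sum.inl s) with
      | none => exact min_le_left _ _
      | some a =>
        refine le_trans (min_le_right _ _) ?_
        exact Finset.inf'_le (fun sa : S × A => C sa.1 sa.2) (Finset.mem_univ (s, a))
    have hP0 := resP_nonneg s0 π' hT0
    have hP1 := resP_rowsum s0 π' hT1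
    have key2 : ∀ s : S,
        ¬ ProperFrom (fun x y => lollyT k T s0 x (π' x) y) (fun y => y = Sum.inl sg)
          (Sum.inl s) →
        Tendsto (fun n => expCost (fun x y => lollyT k T s0 x (π' x) y)
          (fun x => lollyC k C p x (π' x)) (fun y => y = Sum.inl sg) n (Sum.inl s))
          atTop atTop := by
      intro s hs
      have he : (fun n => hitProb (fun x y => lollyT k T s0 x (π' x) y)
          (fun y => y = Sum.inl sg) n (Sum.inl s))
          = fun n => hitProb (resP T s0 k π') (fun t => t = sg) n s := by
        funext n; exact hitProb_transfer s0 sg π' n s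
      have hs' : ¬ ProperFrom (resP T s0 k π') (fun t => t = sg) s := by
        intro hcon
        apply hs
        show Tendsto _ atTop (nhds 1)
        rw [he]
        exact hcon
      have := improper_expCost_tendsto (K := resK C p k π') hP0 hP1 hKc hcdef hs'
      have he2 : (fun n => expCost (fun x y => lollyT k T s0 x (π' x) y)
          (fun x => lollyC k C p x (π' x)) (fun y => y = Sum.inl sg) n (Sum.inl s))
          = fun n => expCost (resP T s0 k π') (resK C p k π') (fun t => t = sg) n s := by
        funext n; exact expCost_transfer s0 sg π' n s
      rw [he2]
      exact this
    cases x with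
    | inl s => exact key2 s himp'
    | inr i =>
      have hchainH := chain_iter s0
        (fun n x => hitProb (fun x y => lollyT k T s0 x (π' x) y)
          (fun y => y = Sum.inl sg) n x)
        (fun n i => hitProb_chain_step s0 sg π' n i) (k - (i : ℕ)) i (hile i)
      have hs0 : ¬ ProperFrom (fun x y => lollyT k T s0 x (π' x) y)
          (fun y => y = Sum.inl sg) (Sum.inl s0) := by
        intro hcon
        apply himp'
        show Tendsto _ atTop (nhds 1)
        refine (tendsto_add_atTop_iff_nat (k - (i : ℕ) + 1)).mp ?_
        have he : (fun n => hitProb (fun x y => lollyT k T s0 x (π' x) y)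
            (fun y => y = Sum.inl sg) (n + (k - (i : ℕ) + 1)) (Sum.inr i))
            = fun n => hitProb (fun x y => lollyT k T s0 x (π' x) y)
              (fun y => y = Sum.inl sg) n (Sum.inl s0) := by
          funext n; exact hchainH n
        rw [he]
        exact hcon
      have h1 := key2 s0 hs0
      have hchainE := chain_iter s0
        (fun n x => expCost (fun x y => lollyT k T s0 x (π' x) y)
          (fun x => lollyC k C p x (π' x)) (fun y => y = Sum.inl sg) n x)
        (fun n i => expCost_chain_step s0 sg π' n i) (k - (i : ℕ)) i (hile i)
      refine (tendsto_add_atTop_iff_nat (k - (i : ℕ) + 1)).mp ?_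
      have he : (fun n => expCost (fun x y => lollyT k T s0 x (π' x) y)
          (fun x => lollyC k C p x (π' x)) (fun y => y = Sum.inl sg) (n + (k - (i : ℕ) + 1))
          (Sum.inr i))
          = fun n => expCost (fun x y => lollyT k T s0 x (π' x) y)
            (fun x => lollyC k C p x (π' x)) (fun y => y = Sum.inl sg) n (Sum.inl s0) := by
        funext n; exact hchainE n
      rw [he]
      exact h1
  -- Part 3 : the optimal values agree
  · have hT0' := lollyT_nonneg hT0 k s0
    have hC0' : ∀ x a, 0 ≤ lollyC k C p x a := lollyC_nonneg hC hp k
    have hC0 : ∀ s a, 0 ≤ C s a := fun s a => (hC s a).le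
    -- uniform bound B on value iteration of M
    obtain ⟨B, hB⟩ := expCost_bounded (P := fun s s' => T s (π s) s')
      (G := fun t => t = sg) (K := fun s => C s (π s))
      (fun s s' => hT0 s (π s) s') (fun s => hT1 s (π s)) hπ
    have hVIMB : ∀ n s, VI T C (fun t => t = sg) n s ≤ B := fun n s =>
      le_trans (VI_le_expCost hT0 π (fun s => hT1 s (π s)) n s) (hB n s)
    have hVIchain : ∀ (i : Fin (k + 1)) (n : ℕ),
        VI (lollyT k T s0) (lollyC k C p) (fun y => y = Sum.inl sg) (n + (k - (i : ℕ) + 1))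
          (Sum.inr i)
        = VI (lollyT k T s0) (lollyC k C p) (fun y => y = Sum.inl sg) n (Sum.inl s0) :=
      fun i => chain_iter s0
        (fun n x => VI (lollyT k T s0) (lollyC k C p) (fun y => y = Sum.inl sg) n x)
        (fun n i => VI_chain_step s0 sg n i) (k - (i : ℕ)) i (hile i)
    have hVI'B : ∀ n x, VI (lollyT k T s0) (lollyC k C p) (fun y => y = Sum.inl sg) n x ≤ B := by
      intro n x
      cases x with
      | inl s => exact le_trans (VI_lolly_le hT0 s0 sg n s) (hVIMB n s)
      | inr i =>
        refine le_trans (VI_mono' hT0' hC0' (Nat.le_add_right n (k - (i : ℕ) + 1)) _) ?_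
        rw [hVIchain i n]
        exact le_trans (VI_lolly_le hT0 s0 sg n s0) (hVIMB n s0)
    have hbddx : ∀ x, BddAbove (Set.range fun n =>
        VI (lollyT k T s0) (lollyC k C p) (fun y => y = Sum.inl sg) n x) := by
      intro x
      exact ⟨B, by rintro b ⟨n, rfl⟩; exact hVI'B n x⟩
    have hmonox : ∀ x, Monotone fun n =>
        VI (lollyT k T s0) (lollyC k C p) (fun y => y = Sum.inl sg) n x := fun x =>
      monotone_nat_of_le_succ fun n => VI_mono hT0' hC0' n x
    set W : (S ⊕ Fin (k + 1)) → ℝ := fun x =>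
      ⨆ n, VI (lollyT k T s0) (lollyC k C p) (fun y => y = Sum.inl sg) n x with hW
    have htendW : ∀ x, Tendsto (fun n =>
        VI (lollyT k T s0) (lollyC k C p) (fun y => y = Sum.inl sg) n x) atTop (nhds (W x)) :=
      fun x => tendsto_atTop_ciSup (hmonox x) (hbddx x)
    have hWnonneg : ∀ x, 0 ≤ W x := by
      intro x
      have h0 : VI (lollyT k T s0) (lollyC k C p) (fun y => y = Sum.inl sg) 0 x = 0 := rfl
      calc (0 : ℝ) = VI (lollyT k T s0) (lollyC k C p) (fun y => y = Sum.inl sg) 0 x := h0.symm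
        _ ≤ W x := le_ciSup (hbddx x) 0
    -- the fixed-point inequality for W at original states
    have hWfix : ∀ s : S, s ≠ sg →
        Finset.univ.inf' Finset.univ_nonempty
          (fun a : A => C s a + ∑ s' : S, T s a s' * W (Sum.inl s')) ≤ W (Sum.inl s) := by
      intro s hs
      have hsne : ¬ ((Sum.inl s : S ⊕ Fin (k + 1)) = Sum.inl sg) := by simp [hs]
      have hrec : ∀ m, VI (lollyT k T s0) (lollyC k C p) (fun y => y = Sum.inl sg) (m + 1)
          (Sum.inl s) = Finset.univ.inf' Finset.univ_nonempty
            (fun a' : Option A => lollyC k C p (Sum.inl s) a' +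
              ∑ y, lollyT k T s0 (Sum.inl s) a' y *
                VI (lollyT k T s0) (lollyC k C p) (fun y => y = Sum.inl sg) m y) := by
        intro m
        simp only [VI, hsne, if_false]
      -- limits
      have hL : Tendsto (fun m => VI (lollyT k T s0) (lollyC k C p)
          (fun y => y = Sum.inl sg) (m + 1) (Sum.inl s)) atTop (nhds (W (Sum.inl s))) :=
        (tendsto_add_atTop_iff_nat 1).mpr (htendW (Sum.inl s))
      have hR : Tendsto (fun m => Finset.univ.inf' Finset.univ_nonempty
          (fun a' : Option A => lollyC k C p (Sum.inl s) a' +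
            ∑ y, lollyT k T s0 (Sum.inl s) a' y *
              VI (lollyT k T s0) (lollyC k C p) (fun y => y = Sum.inl sg) m y)) atTop
          (nhds (Finset.univ.inf' Finset.univ_nonempty
            (fun a' : Option A => lollyC k C p (Sum.inl s) a' +
              ∑ y, lollyT k T s0 (Sum.inl s) a' y * W y))) := by
        apply tendsto_finset_inf''
        intro a' _
        apply Tendsto.const_add
        apply tendsto_finset_sum
        intro y _
        exact (htendW y).const_mul _
      have heq : W (Sum.inl s) = Finset.univ.inf' Finset.univ_nonempty
          (fun a' : Option A => lollyC k C p (Sum.inl s) a' +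
            ∑ y, lollyT k T s0 (Sum.inl s) a' y * W y) := by
        refine tendsto_nhds_unique ?_ hR
        have : (fun m => VI (lollyT k T s0) (lollyC k C p)
            (fun y => y = Sum.inl sg) (m + 1) (Sum.inl s))
            = fun m => Finset.univ.inf' Finset.univ_nonempty
              (fun a' : Option A => lollyC k C p (Sum.inl s) a' +
                ∑ y, lollyT k T s0 (Sum.inl s) a' y *
                  VI (lollyT k T s0) (lollyC k C p) (fun y => y = Sum.inl sg) m y) :=
          funext hrec
        rw [← this]
        exact hL
      -- identify the minimizing action
      obtain ⟨a₀, _, ha₀⟩ := Finset.exists_mem_eq_inf' (Finset.univ_nonempty)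
        (fun a' : Option A => lollyC k C p (Sum.inl s) a' +
          ∑ y, lollyT k T s0 (Sum.inl s) a' y * W y)
      cases a₀ with
      | none =>
        exfalso
        have hcomp : lollyC k C p (Sum.inl s) none +
            ∑ y, lollyT k T s0 (Sum.inl s) none y * W y = p + W (Sum.inl s) := by
          congr 1
          rw [Fintype.sum_sum_type]
          have hz : ∀ j : Fin (k + 1), lollyT k T s0 (Sum.inl s) none (Sum.inr j) *
              W (Sum.inr j) = 0 := by
            intro j; rw [lollyT_inl_inr, zero_mul]
          rw [Finset.sum_congr rfl (fun j _ => hz j), Finset.sum_const, smul_zero, add_zero]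
          have : ∀ s' : S, lollyT k T s0 (Sum.inl s) none (Sum.inl s') * W (Sum.inl s')
              = (if s' = s then 1 else 0) * W (Sum.inl s') := by
            intro s'; rw [lollyT_inl_none]
          rw [Finset.sum_congr rfl (fun s' _ => this s')]
          exact sum_indicator_mul s (fun s' => W (Sum.inl s'))
        have : W (Sum.inl s) = p + W (Sum.inl s) := heq.trans (ha₀.trans hcomp)
        linarith
      | some a =>
        have hcomp : lollyC k C p (Sum.inl s) (some a) +
            ∑ y, lollyT k T s0 (Sum.inl s) (some a) y * W y
            = C s a + ∑ s' : S, T s a s' * W (Sum.inl s') := by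
          congr 1
          rw [Fintype.sum_sum_type]
          have hz : ∀ j : Fin (k + 1), lollyT k T s0 (Sum.inl s) (some a) (Sum.inr j) *
              W (Sum.inr j) = 0 := by
            intro j; rw [lollyT_inl_inr, zero_mul]
          rw [Finset.sum_congr rfl (fun j _ => hz j), Finset.sum_const, smul_zero, add_zero]
          rfl
        have hWeq : W (Sum.inl s) = C s a + ∑ s' : S, T s a s' * W (Sum.inl s') :=
          heq.trans (ha₀.trans hcomp)
        rw [hWeq]
        exact Finset.inf'_le _ (Finset.mem_univ a)
    -- VI of M is dominated by W
    have hVIle : ∀ n s, VI T C (fun t => t = sg) n s ≤ W (Sum.inl s) := by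
      intro n
      induction n with
      | zero => intro s; exact hWnonneg (Sum.inl s)
      | succ n ih =>
        intro s
        by_cases h : s = sg
        · simp only [VI, h, if_true]
          exact hWnonneg _
        · simp only [VI, h, if_false]
          refine le_trans ?_ (hWfix s h)
          apply Finset.le_inf'
          intro a _
          refine le_trans (Finset.inf'_le _ (Finset.mem_univ a)) ?_
          gcongr with s' _
          · exact hT0 s a s'
          · exact ih s'
    -- conclude
    have hbddM : BddAbove (Set.range fun n => VI T C (fun t => t = sg) n s0) :=
      ⟨B, by rintro b ⟨n, rfl⟩; exact hVIMB n s0⟩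
    have hd0 : ((0 : Fin (k + 1)) : ℕ) = 0 := rfl
    apply le_antisymm
    · apply ciSup_le
      intro n
      calc VI (lollyT k T s0) (lollyC k C p) (fun y => y = Sum.inl sg) n
            (Sum.inr (0 : Fin (k + 1)))
          ≤ VI (lollyT k T s0) (lollyC k C p) (fun y => y = Sum.inl sg)
            (n + (k - ((0 : Fin (k + 1)) : ℕ) + 1)) (Sum.inr (0 : Fin (k + 1))) :=
            VI_mono' hT0' hC0' (Nat.le_add_right _ _) _
        _ = VI (lollyT k T s0) (lollyC k C p) (fun y => y = Sum.inl sg) n (Sum.inl s0) :=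
            hVIchain 0 n
        _ ≤ VI T C (fun t => t = sg) n s0 := VI_lolly_le hT0 s0 sg n s0
        _ ≤ ⨆ n, VI T C (fun t => t = sg) n s0 := le_ciSup hbddM n
    · apply ciSup_le
      intro n
      refine le_trans (hVIle n s0) ?_
      apply ciSup_le
      intro m
      calc VI (lollyT k T s0) (lollyC k C p) (fun y => y = Sum.inl sg) m (Sum.inl s0)
          = VI (lollyT k T s0) (lollyC k C p) (fun y => y = Sum.inl sg)
            (m + (k - ((0 : Fin (k + 1)) : ℕ) + 1)) (Sum.inr (0 : Fin (k + 1))) :=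
            (hVIchain 0 m).symm
        _ ≤ ⨆ n, VI (lollyT k T s0) (lollyC k C p) (fun y => y = Sum.inl sg) n
            (Sum.inr (0 : Fin (k + 1))) := le_ciSup (hbddx _) _
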